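/- Consider the selection operator Σ[μ] = e^{−μ(X)}·𝟙_X on a compact X ⊆ ℝ^d. Then Σ satisfies ‖Σ[μ] − Σ[ν]‖_∞ ≤ ‖μ − ν‖_TV for all nonnegative finite measures μ, ν, and ⟨μ, Σ[μ]⟩ = μ(X) e^{−μ(X)} ≤ μ(X) for all nonnegative finite μ; nevertheless, for any nonnegative initial datum μ₀ with μ₀(X) > 0, the total mass t ↦ μ_t(X) of the measure solution solves the ODE x' = x e^{−x} and tends to +∞ as t → ∞. -/

import Mathlib

open MeasureTheory Filter Set

noncomputable def tvDist {Y : Type*} [MeasurableSpace Y] (μ ν : Measure Y) : ℝ :=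
  ((μ - ν) Set.univ + (ν - μ) Set.univ).toReal

def IsBoundedBorel {Y : Type*} [MeasurableSpace Y] (f : Y → ℝ) : Prop :=
  Measurable f ∧ ∃ C, ∀ x, |f x| ≤ C

def IsMeasureSolution {Y : Type*} [MeasurableSpace Y] [TopologicalSpace Y]
    (Sig : FiniteMeasure Y → Y → ℝ) (μ₀ : FiniteMeasure Y)
    (μ : ℝ → FiniteMeasure Y) : Prop :=
  μ 0 = μ₀ ∧
  (∀ f : BoundedContinuousFunction Y ℝ,
    ContinuousOn (fun t => ∫ x, f x ∂(μ t : Measure Y)) (Set.Ici 0)) ∧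
  (∀ f : Y → ℝ, IsBoundedBorel f → ∀ t, 0 ≤ t →
    ∫ x, f x ∂(μ t : Measure Y)
      = ∫ x, f x ∂(μ₀ : Measure Y)
        + ∫ s in (0:ℝ)..t, ∫ x, Sig (μ s) x * f x ∂(μ s : Measure Y))

noncomputable def expSig {Y : Type*} [MeasurableSpace Y] :
    FiniteMeasure Y → Y → ℝ :=
  fun μ _ => Real.exp (-(μ.mass : ℝ))

section Aux
variable {Y : Type*} [MeasurableSpace Y]

lemma half_tv (μ ν : Measure Y) [IsFiniteMeasure μ] [IsFiniteMeasure ν] :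
    (μ univ).toReal - (ν univ).toReal ≤ ((μ - ν) univ).toReal := by
  obtain ⟨s, hs, hsl, hsr⟩ := MeasureTheory.hahn_decomposition (μ := μ) (ν := ν)
  have hle : ν.restrict s ≤ μ.restrict s := by
    refine Measure.le_iff.mpr fun t ht => ?_
    rw [Measure.restrict_apply ht, Measure.restrict_apply ht]
    exact hsl _ (ht.inter hs) inter_subset_right
  have h1 : (μ - ν) s = μ s - ν s := by
    calc (μ - ν) s = (μ - ν).restrict s s := (Measure.restrict_apply_self _ _).symm
      _ = (μ.restrict s - ν.restrict s) s := by
          rw [Measure.restrict_sub_eq_restrict_sub_restrict hs]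
      _ = μ.restrict s s - ν.restrict s s := Measure.sub_apply hs hle
      _ = μ s - ν s := by rw [Measure.restrict_apply_self, Measure.restrict_apply_self]
  have hμc : μ sᶜ ≤ ν sᶜ := hsr _ hs.compl Subset.rfl
  have e1 : (μ univ).toReal = (μ s).toReal + (μ sᶜ).toReal := by
    rw [← ENNReal.toReal_add (measure_ne_top _ _) (measure_ne_top _ _),
      measure_add_measure_compl hs]
  have e2 : (ν univ).toReal = (ν s).toReal + (ν sᶜ).toReal := by
    rw [← ENNReal.toReal_add (measure_ne_top _ _) (measure_ne_top _ _),
      measure_add_measure_compl hs]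
  have h2 : (μ s).toReal - (ν s).toReal ≤ ((μ - ν) s).toReal := by
    rw [h1]
    rcases le_total (ν s) (μ s) with h | h
    · rw [ENNReal.toReal_sub_of_le h (measure_ne_top _ _)]
    · have hh : (μ s).toReal ≤ (ν s).toReal := ENNReal.toReal_mono (measure_ne_top _ _) h
      have := ENNReal.toReal_nonneg (a := μ s - ν s)
      linarith
  have h3 : ((μ - ν) s).toReal ≤ ((μ - ν) univ).toReal :=
    ENNReal.toReal_mono (measure_ne_top _ _) (measure_mono (subset_univ s))
  have h4 : (μ sᶜ).toReal ≤ (ν sᶜ).toReal := ENNReal.toReal_mono (measure_ne_top _ _) hμc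
  linarith

lemma abs_mass_sub_le_tv (μ ν : Measure Y) [IsFiniteMeasure μ] [IsFiniteMeasure ν] :
    |(μ univ).toReal - (ν univ).toReal| ≤ tvDist μ ν := by
  have ht : tvDist μ ν = ((μ - ν) univ).toReal + ((ν - μ) univ).toReal :=
    ENNReal.toReal_add (measure_ne_top _ _) (measure_ne_top _ _)
  rw [ht, abs_sub_le_iff]
  constructor
  · linarith [half_tv μ ν, ENNReal.toReal_nonneg (a := (ν - μ) univ)]
  · linarith [half_tv ν μ, ENNReal.toReal_nonneg (a := (μ - ν) univ)]

lemma exp_neg_lip {a b : ℝ} (ha : 0 ≤ a) (hb : 0 ≤ b) :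
    |Real.exp (-a) - Real.exp (-b)| ≤ |a - b| := by
  have key : ∀ x y : ℝ, x ≤ y → y ≤ 0 → Real.exp y - Real.exp x ≤ y - x := by
    intro x y hxy hy
    have hanti : AntitoneOn (fun t : ℝ => Real.exp t - t) (Iic 0) := by
      refine antitoneOn_of_deriv_nonpos (convex_Iic (0:ℝ))
        (Continuous.continuousOn (by continuity))
        (fun t ht => ((Real.differentiable_exp t).sub (differentiable_id t)).differentiableWithinAt)
        (fun t ht => ?_)
      have hd : deriv (fun t : ℝ => Real.exp t - t) t = Real.exp t - 1 := by
        have := ((Real.hasDerivAt_exp t).sub (hasDerivAt_id t)).deriv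
        simpa using this
      rw [hd]
      have ht0 : t < 0 := by simpa using ht
      have : Real.exp t ≤ 1 := Real.exp_le_one_iff.mpr ht0.le
      linarith
    have := hanti (mem_Iic.mpr (hxy.trans hy)) (mem_Iic.mpr hy) hxy
    simp only at this
    linarith
  rcases le_total a b with h | h
  · have h1 : Real.exp (-a) - Real.exp (-b) ≤ -a - -b :=
      key (-b) (-a) (by linarith) (by linarith)
    have h2 : Real.exp (-b) ≤ Real.exp (-a) := Real.exp_le_exp.mpr (by linarith)
    rw [abs_of_nonneg (by linarith), abs_of_nonpos (by linarith)]
    linarith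
  · have h1 : Real.exp (-b) - Real.exp (-a) ≤ -b - -a :=
      key (-a) (-b) (by linarith) (by linarith)
    have h2 : Real.exp (-a) ≤ Real.exp (-b) := Real.exp_le_exp.mpr (by linarith)
    rw [abs_of_nonpos (by linarith), abs_of_nonneg (by linarith)]
    linarith

lemma mass_toReal (ν : FiniteMeasure Y) : ((ν : Measure Y) univ).toReal = (ν.mass : ℝ) := by
  rw [← FiniteMeasure.ennreal_mass, ENNReal.coe_toReal]

lemma integral_const_fm (ν : FiniteMeasure Y) (c : ℝ) :
    ∫ _, c ∂(ν : Measure Y) = (ν.mass : ℝ) * c := by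
  rw [integral_const, smul_eq_mul, measureReal_def, mass_toReal]

end Aux

/-- The operator `Σ[μ] = e^{−μ(X)}𝟙_X` satisfies
`‖Σ[μ]−Σ[ν]‖_∞ ≤ ‖μ−ν‖_TV` and `⟨μ,Σ[μ]⟩ = μ(X)e^{−μ(X)} ≤ μ(X)`; nevertheless, for any
nonnegative initial datum with `μ₀(X) > 0`, the total mass of the measure solution solves
the ODE `x' = x e^{−x}` and tends to `+∞` as `t → ∞`. -/
theorem selection_unbounded_mass_example {d : ℕ} (X : Set (EuclideanSpace ℝ (Fin d)))
    (hX : IsCompact X) :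
    (∀ μ ν : FiniteMeasure X, ∀ x : X,
      |expSig μ x - expSig ν x| ≤ tvDist (μ : Measure X) (ν : Measure X)) ∧
    (∀ μ : FiniteMeasure X,
      (∫ x, expSig μ x ∂(μ : Measure X) = (μ.mass : ℝ) * Real.exp (-(μ.mass : ℝ))) ∧
      ∫ x, expSig μ x ∂(μ : Measure X) ≤ (μ.mass : ℝ)) ∧
    (∀ (μ₀ : FiniteMeasure X) (μ : ℝ → FiniteMeasure X),
      IsMeasureSolution expSig μ₀ μ → 0 < (μ₀.mass : ℝ) →
        (∀ t, 0 ≤ t →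
          HasDerivWithinAt (fun s => ((μ s).mass : ℝ))
            (((μ t).mass : ℝ) * Real.exp (-((μ t).mass : ℝ))) (Set.Ici 0) t) ∧
        Tendsto (fun t => ((μ t).mass : ℝ)) atTop atTop) := by
  refine ⟨?_, ?_, ?_⟩
  · -- Lipschitz bound
    intro μ ν x
    have h1 : |Real.exp (-(μ.mass : ℝ)) - Real.exp (-(ν.mass : ℝ))|
        ≤ |(μ.mass : ℝ) - (ν.mass : ℝ)| := exp_neg_lip μ.mass.coe_nonneg ν.mass.coe_nonneg
    have h2 : |((μ : Measure X) univ).toReal - ((ν : Measure X) univ).toReal|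
        ≤ tvDist (μ : Measure X) (ν : Measure X) := abs_mass_sub_le_tv _ _
    rw [mass_toReal, mass_toReal] at h2
    exact h1.trans h2
  · -- integral identity
    intro μ
    have h := integral_const_fm μ (Real.exp (-(μ.mass : ℝ)))
    refine ⟨h, ?_⟩
    rw [show (∫ x, expSig μ x ∂(μ : Measure X)) = _ from h]
    have := Real.exp_le_one_iff.mpr (neg_nonpos.mpr μ.mass.coe_nonneg)
    nlinarith [μ.mass.coe_nonneg, Real.exp_pos (-(μ.mass : ℝ))]
  · rintro μ₀ μ ⟨h0, hcont, heq⟩ hm0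
    set m : ℝ → ℝ := fun s => ((μ s).mass : ℝ) with hm
    have hm_nonneg : ∀ s, 0 ≤ m s := fun s => (μ s).mass.coe_nonneg
    -- continuity of the mass
    have hmc : ContinuousOn m (Ici 0) := by
      have h := hcont (BoundedContinuousFunction.const X (1:ℝ))
      have he : ∀ t : ℝ, (∫ x, (BoundedContinuousFunction.const X (1:ℝ)) x
          ∂(μ t : Measure X)) = m t := by
        intro t
        simp only [BoundedContinuousFunction.const_apply]
        rw [integral_const_fm, mul_one]
      simpa only [he] using h
    -- integral equation for the mass
    have key : ∀ t, 0 ≤ t → m t = m 0 + ∫ s in (0:ℝ)..t, m s * Real.exp (-(m s)) := by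
      intro t ht
      have h1 := heq (fun _ => (1:ℝ)) ⟨measurable_const, 1, fun x => by norm_num⟩ t ht
      simp only [expSig, mul_one] at h1
      rw [integral_const_fm, integral_const_fm, mul_one, mul_one] at h1
      have h2 : ∀ s : ℝ, (∫ _, Real.exp (-((μ s).mass : ℝ)) ∂(μ s : Measure X))
          = m s * Real.exp (-(m s)) := fun s => integral_const_fm _ _
      simp only [hm]
      rw [h1, h0]
      congr 1
      exact intervalIntegral.integral_congr fun s _ => h2 s
    -- the globally defined integrand
    set G : ℝ → ℝ := fun s => m (max s 0) * Real.exp (-(m (max s 0))) with hG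
    have hGc : Continuous G := by
      have h1 : ContinuousOn (fun s : ℝ => m s * Real.exp (-(m s))) (Ici 0) :=
        hmc.mul ((Real.continuous_exp.comp continuous_neg).comp_continuousOn hmc)
      have h2 : Continuous fun s : ℝ => max s 0 := continuous_id.max continuous_const
      have h3 : ContinuousOn G univ :=
        h1.comp h2.continuousOn fun s _ => le_max_right s 0
      exact continuousOn_univ.mp h3
    have hGnn : ∀ s, 0 ≤ G s := fun s =>
      mul_nonneg (hm_nonneg _) (Real.exp_pos _).le
    set M : ℝ → ℝ := fun t => m 0 + ∫ s in (0:ℝ)..t, G s with hM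
    have hMd : ∀ t, HasDerivAt M (G t) t := by
      intro t
      exact ((hGc.integral_hasStrictDerivAt 0 t).hasDerivAt).const_add (m 0)
    have heqM : ∀ t ∈ Ici (0:ℝ), m t = M t := by
      intro t ht
      rw [key t ht, hM]
      congr 1
      refine (intervalIntegral.integral_congr fun s hs => ?_).symm
      rw [uIcc_of_le ht] at hs
      rw [hG]
      simp only [max_eq_left hs.1]
    have hGt : ∀ t, 0 ≤ t → G t = m t * Real.exp (-(m t)) := by
      intro t ht; rw [hG]; simp only [max_eq_left ht]
    constructor
    · intro t ht
      have h := ((hMd t).hasDerivWithinAt (s := Ici 0)).congr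
        (fun s hs => heqM s hs) (heqM t ht)
      rw [hGt t ht] at h
      exact h
    · -- unbounded mass
      have hMono : Monotone M := by
        refine monotone_of_deriv_nonneg (fun t => (hMd t).differentiableAt) fun t => ?_
        rw [(hMd t).deriv]; exact hGnn t
      have hmono' : ∀ ⦃a b : ℝ⦄, 0 ≤ a → a ≤ b → m a ≤ m b := by
        intro a b ha hab
        rw [heqM a ha, heqM b (ha.trans hab)]
        exact hMono hab
      have hm0' : 0 < m 0 := by rw [hm]; simpa [h0] using hm0
      have hunb : ∀ L : ℝ, ∃ T, 0 ≤ T ∧ L < m T := by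
        intro L
        by_contra hcon
        push_neg at hcon
        have hLe : ∀ T, 0 ≤ T → m T ≤ L := fun T hT => hcon T hT
        have hL0 : m 0 ≤ L := hLe 0 le_rfl
        set δ : ℝ := m 0 * Real.exp (-L) with hδ
        have hδpos : 0 < δ := mul_pos hm0' (Real.exp_pos _)
        have hGlb : ∀ s ∈ Icc (0:ℝ) ((L - m 0) / δ + 1), δ ≤ G s := by
          intro s hs
          rw [hGt s hs.1]
          have hml : m 0 ≤ m s := hmono' le_rfl hs.1
          have hmu : m s ≤ L := hLe s hs.1
          have hexp : Real.exp (-L) ≤ Real.exp (-(m s)) :=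
            Real.exp_le_exp.mpr (by linarith)
          calc δ = m 0 * Real.exp (-L) := rfl
            _ ≤ m s * Real.exp (-(m s)) := by
                apply mul_le_mul hml hexp (Real.exp_pos _).le (hm_nonneg s)
        set T : ℝ := (L - m 0) / δ + 1 with hT
        have hTpos : 0 < T := by
          have h5 : 0 ≤ (L - m 0) / δ := div_nonneg (by linarith) hδpos.le
          rw [hT]; linarith
        have hint : (∫ s in (0:ℝ)..T, δ) ≤ ∫ s in (0:ℝ)..T, G s := by
          refine intervalIntegral.integral_mono_on hTpos.le
            intervalIntegrable_const (hGc.intervalIntegrable 0 T) hGlb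
        rw [intervalIntegral.integral_const, smul_eq_mul, sub_zero] at hint
        have hmT : m T = m 0 + ∫ s in (0:ℝ)..T, G s := by
          rw [heqM T hTpos.le, hM]
        have : m 0 + T * δ ≤ m T := by rw [hmT]; linarith
        have hTδ : T * δ = (L - m 0) + δ := by
          rw [hT, add_mul, div_mul_cancel₀ _ hδpos.ne', one_mul]
        have : L + δ ≤ m T := by rw [hTδ] at this; linarith
        have := hLe T hTpos.le
        linarith
      rw [tendsto_atTop]
      intro b
      obtain ⟨T, hT0, hTb⟩ := hunb b
      filter_upwards [eventually_ge_atTop T] with t hTt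
      exact le_of_lt (lt_of_lt_of_le hTb (hmono' hT0 hTt))
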